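/- Let A, B, C, D be 2×2 complex matrices. Assume Aᵗσ₃B = Bᵗσ₃A, Cᵗσ₃D = Dᵗσ₃C, and that M := Aᵗσ₃D − Bᵗσ₃C is invertible. Then the 4×4 block matrix [[A, C],[B, D]] is invertible, and its inverse equals the product of 4×4 block matrices [[(Mᵗ)⁻¹, 0],[0, M⁻¹]] · [[0, −I],[I, 0]] · [[Aᵗ, Bᵗ],[Cᵗ, Dᵗ]] · [[0, σ₃],[−σ₃, 0]], where I is the 2×2 identity matrix. -/

import Mathlib

open Matrix

/-! With `P = [[A, C], [B, D]]` and `S = [[0, σ₃], [-σ₃, 0]]`, the blocks of `Pᵀ S P` are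
the bilinear expressions `Xᵀσ₃Y − Yᵀσ₃X`; the hypotheses kill the diagonal ones, leaving
`Pᵀ S P = [[0, M], [-Mᵀ, 0]]`. Inverting this antidiagonal matrix turns `Pᵀ S` into a left
inverse of `P`, which for square matrices is the inverse. -/

/-- The Pauli matrix `σ₃ = diag(1, −1)`. -/
noncomputable def sigma3 : Matrix (Fin 2) (Fin 2) ℂ := !![1, 0; 0, -1]

namespace Matrix

variable {m n R : Type*} [CommRing R]

theorem fromBlocks_transpose_mul_fromBlocks_skew_mul [Fintype m] (A B C D : Matrix m n R)
    (σ : Matrix m m R) :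
    fromBlocks Aᵀ Bᵀ Cᵀ Dᵀ * fromBlocks 0 σ (-σ) 0 * fromBlocks A C B D =
      fromBlocks (Aᵀ * σ * B - Bᵀ * σ * A) (Aᵀ * σ * D - Bᵀ * σ * C)
        (Cᵀ * σ * B - Dᵀ * σ * A) (Cᵀ * σ * D - Dᵀ * σ * C) := by
  simp [fromBlocks_multiply, Matrix.mul_assoc, neg_add_eq_sub]

theorem fromBlocks_inv_mul_fromBlocks_skew_eq_one [Fintype n] [DecidableEq n] {M : Matrix n n R}
    (hM : IsUnit M) :
    fromBlocks (Mᵀ)⁻¹ 0 0 M⁻¹ * fromBlocks 0 (-1) 1 0 * fromBlocks 0 M (-Mᵀ) 0 = 1 := by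
  have hdet : IsUnit M.det := (isUnit_iff_isUnit_det M).mp hM
  have hdetT : IsUnit Mᵀ.det := by rwa [det_transpose]
  simp only [fromBlocks_multiply, Matrix.mul_zero, Matrix.zero_mul, Matrix.mul_neg,
    Matrix.neg_mul, Matrix.mul_one, add_zero, zero_add, neg_neg, neg_zero,
    nonsing_inv_mul _ hdet, nonsing_inv_mul _ hdetT, fromBlocks_one]

end Matrix

theorem sigma3_transpose : sigma3ᵀ = sigma3 := by
  ext i j
  fin_cases i <;> fin_cases j <;> rfl

theorem block_matrix_inverse (A B C D : Matrix (Fin 2) (Fin 2) ℂ)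
    (hAB : Aᵀ * sigma3 * B = Bᵀ * sigma3 * A)
    (hCD : Cᵀ * sigma3 * D = Dᵀ * sigma3 * C)
    (hM : IsUnit (Aᵀ * sigma3 * D - Bᵀ * sigma3 * C)) :
    IsUnit (Matrix.fromBlocks A C B D) ∧
      (Matrix.fromBlocks A C B D)⁻¹ =
        Matrix.fromBlocks ((Aᵀ * sigma3 * D - Bᵀ * sigma3 * C)ᵀ)⁻¹ 0 0
            (Aᵀ * sigma3 * D - Bᵀ * sigma3 * C)⁻¹ *
          Matrix.fromBlocks 0 (-1) 1 0 *
          Matrix.fromBlocks Aᵀ Bᵀ Cᵀ Dᵀ *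
          Matrix.fromBlocks 0 sigma3 (-sigma3) 0 := by
  set M := Aᵀ * sigma3 * D - Bᵀ * sigma3 * C
  have hMt : Mᵀ = Dᵀ * sigma3 * A - Cᵀ * sigma3 * B := by
    simp only [M, transpose_sub, transpose_mul, sigma3_transpose, transpose_transpose,
      Matrix.mul_assoc]
  have hform : fromBlocks Aᵀ Bᵀ Cᵀ Dᵀ * fromBlocks 0 sigma3 (-sigma3) 0 * fromBlocks A C B D =
      fromBlocks 0 M (-Mᵀ) 0 := by
    rw [fromBlocks_transpose_mul_fromBlocks_skew_mul, hAB, hCD, hMt, sub_self, sub_self, neg_sub]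
  have hleft : (fromBlocks (Mᵀ)⁻¹ 0 0 M⁻¹ * fromBlocks 0 (-1) 1 0 * fromBlocks Aᵀ Bᵀ Cᵀ Dᵀ *
      fromBlocks 0 sigma3 (-sigma3) 0) * fromBlocks A C B D = 1 := by
    simp only [Matrix.mul_assoc] at hform ⊢
    rw [hform, ← Matrix.mul_assoc, fromBlocks_inv_mul_fromBlocks_skew_eq_one hM]
  exact ⟨(isUnit_iff_isUnit_det _).mpr (isUnit_det_of_left_inverse hleft), inv_eq_left_inv hleft⟩
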